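/- For any lattice polytope P ⊂ ℝ^{d-1} with Vol_{d-1}(P) = α^{d-1}, one has ∫₀^∞ φ_D(λ)dλ ≥ (1/α)·∫₀^1(1−β^{d-1})dβ = (1/α)·(d−1)/d, with equality if and only if (1/α)P tiles ℝ^{d-1} by ℤ^{d-1}-translates. -/

import Mathlib

open MeasureTheory Set Pointwise

/-- The cone in `ℝ^n × ℝ` over `P × {1}`. -/
def coneOver (n : ℕ) (P : Set (EuclideanSpace ℝ (Fin n))) :
    Set (EuclideanSpace ℝ (Fin n) × ℝ) :=
  {p | ∃ t : ℝ, 0 ≤ t ∧ ∃ x ∈ P, p = (t • x, t)}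

/-- The unit cell `W_v = v + [0,1]^n` at `v ∈ ℤ^n`. -/
def unitCell (n : ℕ) (v : Fin n → ℤ) : Set (EuclideanSpace ℝ (Fin n)) :=
  {x | ∀ j : Fin n, (v j : ℝ) ≤ x j ∧ x j ≤ (v j : ℝ) + 1}

/-- The point of `ℝ^n` with integer coordinates `u`. -/
def intVec (n : ℕ) (u : Fin n → ℤ) : EuclideanSpace ℝ (Fin n) :=
  WithLp.toLp 2 (fun j => (u j : ℝ))

/-- `(x, t)` is covered by the translated cones `(u, 1) + C_P`, `u ∈ ℤ^n`. -/
def CoveredAt (n : ℕ) (P : Set (EuclideanSpace ℝ (Fin n)))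
    (x : EuclideanSpace ℝ (Fin n)) (t : ℝ) : Prop :=
  ∃ u : Fin n → ℤ, ∃ c ∈ coneOver n P,
    ((x, t) : EuclideanSpace ℝ (Fin n) × ℝ) = (intVec n u, (1 : ℝ)) + c


noncomputable section

lemma vol_transfer (n : ℕ) (S : Set (Fin n → ℝ)) :
    volume (((MeasurableEquiv.toLp 2 (Fin n → ℝ)).symm) ⁻¹' S) = volume S := by
  rw [← (EuclideanSpace.volume_preserving_symm_measurableEquiv_toLp (Fin n)).map_eq,
    MeasurableEquiv.map_apply]

lemma vol_unitCell (n : ℕ) (v : Fin n → ℤ) : volume (unitCell n v) = 1 := by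
  have : unitCell n v = ((MeasurableEquiv.toLp 2 (Fin n → ℝ)).symm) ⁻¹'
      (Set.pi Set.univ (fun j => Set.Icc (v j : ℝ) ((v j : ℝ) + 1))) := by
    ext x
    simp only [unitCell, Set.mem_setOf_eq, Set.mem_preimage, Set.mem_pi, Set.mem_univ,
      forall_true_left, Set.mem_Icc]
    rfl
  rw [this, vol_transfer, volume_pi_pi]
  simp

lemma vol_hyperplane (n : ℕ) (j : Fin n) (c : ℝ) :
    volume {x : EuclideanSpace ℝ (Fin n) | x j = c} = 0 := by
  have : {x : EuclideanSpace ℝ (Fin n) | x j = c} =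
      ((MeasurableEquiv.toLp 2 (Fin n → ℝ)).symm) ⁻¹' {f : Fin n → ℝ | f j = c} := rfl
  rw [this, vol_transfer, volume_pi]
  exact MeasureTheory.Measure.pi_hyperplane (fun _ => (volume : Measure ℝ)) j c

noncomputable section
namespace TilingAux

variable {n : ℕ}

def tr (n : ℕ) (v : Fin n → ℤ) (S : Set (EuclideanSpace ℝ (Fin n))) :
    Set (EuclideanSpace ℝ (Fin n)) := (fun x => intVec n v + x) '' S

lemma mem_tr {v : Fin n → ℤ} {S : Set (EuclideanSpace ℝ (Fin n))}
    {y : EuclideanSpace ℝ (Fin n)} : y ∈ tr n v S ↔ y - intVec n v ∈ S := by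
  constructor
  · rintro ⟨x, hx, rfl⟩; simpa using hx
  · intro h; exact ⟨y - intVec n v, h, by show intVec n v + (y - intVec n v) = y; rw [add_comm, sub_add_cancel]⟩

lemma vol_tr (v : Fin n → ℤ) (S : Set (EuclideanSpace ℝ (Fin n))) :
    volume (tr n v S) = volume S := by
  unfold tr
  rw [Set.image_add_left]
  exact measure_preimage_add volume _ S

lemma intVec_add (v w : Fin n → ℤ) : intVec n (v + w) = intVec n v + intVec n w := by
  ext j
  show ((v j + w j : ℤ) : ℝ) = (v j : ℝ) + (w j : ℝ)
  push_cast; ring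

lemma tr_tr (v w : Fin n → ℤ) (S : Set (EuclideanSpace ℝ (Fin n))) :
    tr n v (tr n w S) = tr n (v + w) S := by
  unfold tr
  rw [← Set.image_comp]
  have : ((fun x => intVec n v + x) ∘ fun x => intVec n w + x)
      = fun x => intVec n (v + w) + x := by
    funext x; simp only [Function.comp_apply, intVec_add]; abel
  rw [this]

lemma intVec_apply (v : Fin n → ℤ) (j : Fin n) : intVec n v j = (v j : ℝ) := rfl
lemma sub_apply (x y : EuclideanSpace ℝ (Fin n)) (j : Fin n) : (x - y) j = x j - y j := rfl
lemma add_apply' (x y : EuclideanSpace ℝ (Fin n)) (j : Fin n) : (x + y) j = x j + y j := rfl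
lemma smul_apply' (c : ℝ) (x : EuclideanSpace ℝ (Fin n)) (j : Fin n) : (c • x) j = c * x j := rfl

lemma tr_unitCell (v : Fin n → ℤ) : tr n v (unitCell n (fun _ => 0)) = unitCell n v := by
  ext y
  rw [mem_tr]
  simp only [unitCell, Set.mem_setOf_eq]
  constructor
  · intro h j; have := h j; rw [sub_apply, intVec_apply] at this
    push_cast at this ⊢; constructor <;> linarith [this.1, this.2]
  · intro h j; rw [sub_apply, intVec_apply]
    have := h j; push_cast at this ⊢; constructor <;> linarith [this.1, this.2]

def icoCell (n : ℕ) (v : Fin n → ℤ) : Set (EuclideanSpace ℝ (Fin n)) :=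
  {x | ∀ j : Fin n, (v j : ℝ) ≤ x j ∧ x j < (v j : ℝ) + 1}

lemma measurable_coord (j : Fin n) : Measurable (fun x : EuclideanSpace ℝ (Fin n) => x j) :=
  (measurable_pi_apply j).comp ((MeasurableEquiv.toLp 2 (Fin n → ℝ)).symm).measurable

lemma measurable_icoCell (v : Fin n → ℤ) : MeasurableSet (icoCell n v) := by
  have : icoCell n v = ⋂ j, (fun x : EuclideanSpace ℝ (Fin n) => x j) ⁻¹'
      (Set.Ico (v j : ℝ) ((v j : ℝ) + 1)) := by
    ext x; simp [icoCell, Set.mem_Ico]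
  rw [this]
  exact MeasurableSet.iInter fun j => (measurable_coord j) measurableSet_Ico

lemma measurable_unitCell (v : Fin n → ℤ) : MeasurableSet (unitCell n v) := by
  have : unitCell n v = ⋂ j, (fun x : EuclideanSpace ℝ (Fin n) => x j) ⁻¹'
      (Set.Icc (v j : ℝ) ((v j : ℝ) + 1)) := by
    ext x; simp [unitCell, Set.mem_Icc]
  rw [this]
  exact MeasurableSet.iInter fun j => (measurable_coord j) measurableSet_Icc

lemma iUnion_icoCell : (⋃ v : Fin n → ℤ, icoCell n v) = Set.univ := by
  ext x
  simp only [Set.mem_iUnion, Set.mem_univ, iff_true]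
  refine ⟨fun j => ⌊x j⌋, fun j => ⟨Int.floor_le _, Int.lt_floor_add_one _⟩⟩

lemma disjoint_icoCell {v w : Fin n → ℤ} (h : v ≠ w) :
    Disjoint (icoCell n v) (icoCell n w) := by
  rw [Set.disjoint_left]
  rintro x hx hx'
  apply h
  funext j
  have h1 := hx j; have h2 := hx' j
  have : (v j : ℝ) = w j := by
    have a1 : (v j : ℝ) < w j + 1 := lt_of_le_of_lt h1.1 h2.2
    have a2 : (w j : ℝ) < v j + 1 := lt_of_le_of_lt h2.1 h1.2
    have b1 : v j < w j + 1 := by exact_mod_cast a1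
    have b2 : w j < v j + 1 := by exact_mod_cast a2
    have hvw : v j = w j := by omega
    exact_mod_cast congrArg (fun z : ℤ => (z:ℝ)) hvw
  exact_mod_cast this

/-- difference between closed and half-open cell is null -/
lemma vol_inter_cell_eq (S : Set (EuclideanSpace ℝ (Fin n))) (v : Fin n → ℤ) :
    volume (S ∩ unitCell n v) = volume (S ∩ icoCell n v) := by
  have hsub : S ∩ unitCell n v ⊆ (S ∩ icoCell n v) ∪
      (⋃ j, {x : EuclideanSpace ℝ (Fin n) | x j = (v j : ℝ) + 1}) := by
    rintro x ⟨hS, hc⟩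
    by_cases h : ∀ j, x j < (v j : ℝ) + 1
    · exact Or.inl ⟨hS, fun j => ⟨(hc j).1, h j⟩⟩
    · push_neg at h
      obtain ⟨j, hj⟩ := h
      exact Or.inr (Set.mem_iUnion.2 ⟨j, le_antisymm (hc j).2 hj⟩)
  have hnull : volume (⋃ j, {x : EuclideanSpace ℝ (Fin n) | x j = (v j : ℝ) + 1}) = 0 :=
    measure_iUnion_null fun j => vol_hyperplane n j _
  refine le_antisymm ?_ (measure_mono (Set.inter_subset_inter_right S (fun x hx j => ⟨(hx j).1, le_of_lt (hx j).2⟩)))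
  calc volume (S ∩ unitCell n v) ≤ volume ((S ∩ icoCell n v) ∪ _) := measure_mono hsub
    _ ≤ volume (S ∩ icoCell n v) + volume (⋃ j, {x : EuclideanSpace ℝ (Fin n) | x j = (v j : ℝ) + 1}) := measure_union_le _ _
    _ = volume (S ∩ icoCell n v) := by rw [hnull, add_zero]


variable {P : Set (EuclideanSpace ℝ (Fin n))}

lemma vol_partition {S : Set (EuclideanSpace ℝ (Fin n))} (hS : MeasurableSet S) :
    (∑' v : Fin n → ℤ, volume (S ∩ icoCell n v)) = volume S := by
  have hdis : Pairwise (Function.onFun Disjoint fun v : Fin n → ℤ => S ∩ icoCell n v) := by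
    intro v w hvw
    exact (disjoint_icoCell hvw).mono Set.inter_subset_right Set.inter_subset_right
  have h := measure_iUnion (μ := volume) hdis
      (fun v : Fin n → ℤ => hS.inter (measurable_icoCell v))
  rw [← Set.inter_iUnion, iUnion_icoCell, Set.inter_univ] at h
  exact h.symm

lemma intVec_neg (v : Fin n → ℤ) : intVec n (-v) = - intVec n v := by
  ext j; show ((-v j : ℤ) : ℝ) = -(v j : ℝ); push_cast; ring

lemma tr_inter (v : Fin n → ℤ) (S T : Set (EuclideanSpace ℝ (Fin n))) :
    tr n v S ∩ T = tr n v (S ∩ tr n (-v) T) := by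
  ext y
  simp only [Set.mem_inter_iff, mem_tr, intVec_neg, sub_neg_eq_add, sub_add_cancel]

lemma sum_vol_tr_inter_cell {S : Set (EuclideanSpace ℝ (Fin n))} (hS : MeasurableSet S) :
    (∑' v : Fin n → ℤ, volume (tr n v S ∩ unitCell n (fun _ => 0))) = volume S := by
  have h1 : ∀ v : Fin n → ℤ, volume (tr n v S ∩ unitCell n (fun _ => 0))
      = volume (S ∩ icoCell n (-v)) := by
    intro v
    rw [tr_inter, vol_tr, tr_unitCell, vol_inter_cell_eq]
  calc (∑' v : Fin n → ℤ, volume (tr n v S ∩ unitCell n (fun _ => 0)))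
      = ∑' v : Fin n → ℤ, volume (S ∩ icoCell n (-v)) := tsum_congr h1
    _ = ∑' v : Fin n → ℤ, volume (S ∩ icoCell n v) := by
        simpa using (Equiv.neg (Fin n → ℤ)).tsum_eq
          (fun v => volume (S ∩ icoCell n v))
    _ = volume S := vol_partition hS


/-- The union of all integer translates of `lam • P`. -/
def covUnion (n : ℕ) (P : Set (EuclideanSpace ℝ (Fin n))) (lam : ℝ) :
    Set (EuclideanSpace ℝ (Fin n)) := ⋃ v : Fin n → ℤ, tr n v (lam • P)

lemma coveredAt_iff {lam : ℝ} (hlam : 0 ≤ lam) (x : EuclideanSpace ℝ (Fin n)) :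
    CoveredAt n P x (lam + 1) ↔ x ∈ covUnion n P lam := by
  constructor
  · rintro ⟨u, c, ⟨t, ht, y, hy, rfl⟩, he⟩
    rw [Prod.ext_iff] at he
    obtain ⟨he1, he2⟩ := he
    simp only [Prod.fst_add, Prod.snd_add] at he1 he2
    have htl : t = lam := by linarith [he2]
    subst htl
    refine Set.mem_iUnion.2 ⟨u, ?_⟩
    rw [mem_tr]
    rw [he1]
    have : intVec n u + t • y - intVec n u = t • y := by abel
    rw [this]
    exact smul_mem_smul_set hy
  · intro hx
    obtain ⟨v, hv⟩ := Set.mem_iUnion.1 hx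
    rw [mem_tr] at hv
    obtain ⟨y, hy, hxy⟩ := hv
    refine ⟨v, (lam • y, lam), ⟨lam, hlam, y, hy, rfl⟩, ?_⟩
    rw [Prod.ext_iff]
    constructor
    · show x = intVec n v + lam • y
      simp only at hxy
      rw [hxy]; abel
    · show lam + 1 = 1 + lam
      ring

lemma not_coveredAt_neg {lam : ℝ} (hlam : lam < 0) (x : EuclideanSpace ℝ (Fin n)) :
    ¬ CoveredAt n P x (lam + 1) := by
  rintro ⟨u, c, ⟨t, ht, y, hy, rfl⟩, he⟩
  rw [Prod.ext_iff] at he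
  have := he.2
  simp only [Prod.snd_add] at this
  have : t = lam := by linarith [this]
  linarith [ht, hlam, this]

lemma smul_set_mono_scale (hconv : Convex ℝ P) (h0 : (0 : EuclideanSpace ℝ (Fin n)) ∈ P)
    {a b : ℝ} (ha : 0 ≤ a) (hab : a ≤ b) : a • P ⊆ b • P := by
  rcases eq_or_lt_of_le (ha.trans hab) with hb | hb
  · have hb0 : b = 0 := hb.symm
    have ha0 : a = 0 := le_antisymm (hb0 ▸ hab) ha
    rw [ha0, hb0]
  · rintro z ⟨y, hy, rfl⟩
    have hmem : (a / b) • y ∈ P := by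
      refine hconv.smul_mem_of_zero_mem h0 hy ⟨by positivity, ?_⟩
      rw [div_le_one hb]
      exact hab
    refine ⟨(a / b) • y, hmem, ?_⟩
    show b • (a / b) • y = a • y
    rw [smul_smul, mul_div_cancel₀ _ (ne_of_gt hb)]

lemma covUnion_mono (hconv : Convex ℝ P) (h0 : (0 : EuclideanSpace ℝ (Fin n)) ∈ P)
    {a b : ℝ} (ha : 0 ≤ a) (hab : a ≤ b) : covUnion n P a ⊆ covUnion n P b := by
  refine Set.iUnion_mono fun v => Set.image_mono (smul_set_mono_scale hconv h0 ha hab)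

lemma isCompact_smul_set (hPc : IsCompact P) (lam : ℝ) : IsCompact (lam • P) := by
  simpa [Set.image_smul] using hPc.image (continuous_const_smul lam)

lemma measurableSet_covUnion (hPc : IsCompact P) (lam : ℝ) :
    MeasurableSet (covUnion n P lam) := by
  refine MeasurableSet.iUnion fun v => ?_
  have : IsCompact (tr n v (lam • P)) :=
    (isCompact_smul_set hPc lam).image (continuous_const.add continuous_id)
  exact this.isClosed.measurableSet


lemma vol_pair_zero {X : Type*} [MeasurableSpace X] {μ : Measure X} {ι : Type*} [Countable ι] [DecidableEq ι]
    {A : ι → Set X} (hm : ∀ i, NullMeasurableSet (A i) μ)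
    (hfin : (∑' i, μ (A i)) ≠ ⊤)
    (heq : μ (⋃ i, A i) = ∑' i, μ (A i)) {i j : ι} (hij : i ≠ j) :
    μ (A i ∩ A j) = 0 := by
  set B : ι → Set X := fun k => if k = j then A j \ A i else A k with hB
  have hcov : (⋃ k, A k) ⊆ ⋃ k, B k := by
    intro x hx
    obtain ⟨k, hk⟩ := Set.mem_iUnion.1 hx
    by_cases hkj : k = j
    · subst hkj
      by_cases hxi : x ∈ A i
      · exact Set.mem_iUnion.2 ⟨i, by simp [hB, hij, hxi]⟩
      · exact Set.mem_iUnion.2 ⟨k, by simp [hB, hk, hxi]⟩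
    · exact Set.mem_iUnion.2 ⟨k, by simp [hB, hkj, hk]⟩
  have hsplitA : (∑' k, μ (A k)) = μ (A j) + ∑' k, if k = j then 0 else μ (A k) :=
    by convert ENNReal.tsum_eq_add_tsum_ite j using 3 with k; (funext k; by_cases hk : k = j <;> simp [hk])
  have hsplitB : (∑' k, μ (B k)) = μ (B j) + ∑' k, if k = j then 0 else μ (B k) :=
    by convert ENNReal.tsum_eq_add_tsum_ite j using 3 with k; (funext k; by_cases hk : k = j <;> simp [hk])
  have hrem : (∑' k, if k = j then 0 else μ (B k)) = ∑' k, if k = j then 0 else μ (A k) := by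
    refine tsum_congr fun k => ?_
    by_cases hkj : k = j <;> simp [hB, hkj]
  have hAj : μ (A j ∩ A i) + μ (A j \ A i) = μ (A j) :=
    measure_inter_add_diff₀ (A j) (hm i)
  have hRfin : (∑' k, if k = j then 0 else μ (A k)) ≠ ⊤ := by
    refine ne_top_of_le_ne_top hfin (Summable.tsum_le_tsum (fun k => ?_) ENNReal.summable ENNReal.summable)
    by_cases hkj : k = j <;> simp [hkj]
  have hchain : μ (A j) + (∑' k, if k = j then 0 else μ (A k))
      ≤ μ (B j) + (∑' k, if k = j then 0 else μ (A k)) := by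
    calc μ (A j) + (∑' k, if k = j then 0 else μ (A k)) = ∑' k, μ (A k) := hsplitA.symm
      _ = μ (⋃ k, A k) := heq.symm
      _ ≤ μ (⋃ k, B k) := measure_mono hcov
      _ ≤ ∑' k, μ (B k) := measure_iUnion_le B
      _ = μ (B j) + (∑' k, if k = j then 0 else μ (A k)) := by rw [hsplitB, hrem]
  have hAle : μ (A j) ≤ μ (B j) := by
    exact (WithTop.add_le_add_iff_right hRfin).1 hchain
  have hBj : μ (B j) = μ (A j \ A i) := by simp [hB]
  have hBfin : μ (B j) ≠ ⊤ := by
    refine ne_top_of_le_ne_top hfin ?_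
    rw [hBj]
    exact le_trans (measure_mono Set.diff_subset) (ENNReal.le_tsum j)
  have : μ (A j ∩ A i) + μ (A j \ A i) ≤ 0 + μ (A j \ A i) := by
    rw [zero_add, hAj]
    rw [hBj] at hAle hBfin
    exact hAle
  have hzero : μ (A j ∩ A i) ≤ 0 := by
    refine (WithTop.add_le_add_iff_right ?_).1 this
    rw [hBj] at hBfin; exact hBfin
  rw [Set.inter_comm]
  exact le_antisymm hzero zero_le


lemma vol_smul_P {α lam : ℝ} (hvol : volume P = ENNReal.ofReal (α ^ n)) (hlam : 0 ≤ lam) :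
    volume (lam • P) = ENNReal.ofReal ((α * lam) ^ n) := by
  rw [MeasureTheory.Measure.addHaar_smul volume lam P, hvol, finrank_euclideanSpace_fin,
    ← ENNReal.ofReal_mul (abs_nonneg _), abs_of_nonneg (pow_nonneg hlam n)]
  congr 1
  rw [mul_pow]
  ring

/-- covered volume inside the central cell -/
def Q (n : ℕ) (P : Set (EuclideanSpace ℝ (Fin n))) (lam : ℝ) : ENNReal :=
  volume (covUnion n P lam ∩ unitCell n (fun _ => 0))

lemma covUnion_inter_cell (lam : ℝ) : covUnion n P lam ∩ unitCell n (fun _ => 0)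
    = ⋃ v : Fin n → ℤ, (tr n v (lam • P) ∩ unitCell n (fun _ => 0)) :=
  Set.iUnion_inter _ _

lemma sum_vol_A (hPc : IsCompact P) (lam : ℝ) :
    (∑' v : Fin n → ℤ, volume (tr n v (lam • P) ∩ unitCell n (fun _ => 0)))
      = volume (lam • P) :=
  sum_vol_tr_inter_cell (isCompact_smul_set hPc lam).isClosed.measurableSet

lemma Q_le {α : ℝ} (hPc : IsCompact P) (hvol : volume P = ENNReal.ofReal (α ^ n))
    {lam : ℝ} (hlam : 0 ≤ lam) : Q n P lam ≤ ENNReal.ofReal ((α * lam) ^ n) := by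
  rw [Q, covUnion_inter_cell, ← vol_smul_P hvol hlam, ← sum_vol_A hPc lam]
  exact measure_iUnion_le _

lemma uncov_eq {lam : ℝ} (hlam : 0 ≤ lam) :
    {x : EuclideanSpace ℝ (Fin n) | x ∈ unitCell n (fun _ => 0) ∧ ¬ CoveredAt n P x (lam + 1)}
      = unitCell n (fun _ => 0) \ covUnion n P lam := by
  ext x
  simp only [Set.mem_setOf_eq, Set.mem_diff, coveredAt_iff hlam]

lemma uncov_eq_neg {lam : ℝ} (hlam : lam < 0) :
    {x : EuclideanSpace ℝ (Fin n) | x ∈ unitCell n (fun _ => 0) ∧ ¬ CoveredAt n P x (lam + 1)}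
      = unitCell n (fun _ => 0) := by
  ext x
  simp only [Set.mem_setOf_eq, and_iff_left_iff_imp]
  exact fun _ => not_coveredAt_neg hlam x

lemma Q_fin (lam : ℝ) : Q n P lam ≤ 1 := by
  refine le_trans (measure_mono Set.inter_subset_right) ?_
  rw [vol_unitCell]

lemma vol_uncov (hPc : IsCompact P) {lam : ℝ} (hlam : 0 ≤ lam) :
    volume {x : EuclideanSpace ℝ (Fin n) |
        x ∈ unitCell n (fun _ => 0) ∧ ¬ CoveredAt n P x (lam + 1)}
      = 1 - Q n P lam := by
  rw [uncov_eq hlam]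
  have h1 : unitCell n (fun _ : Fin n => (0:ℤ)) \ covUnion n P lam
      = unitCell n (fun _ => 0) \ (covUnion n P lam ∩ unitCell n (fun _ => 0)) := by
    rw [Set.diff_inter_self_eq_diff]
  rw [h1, measure_diff Set.inter_subset_right
      (((measurableSet_covUnion hPc lam).inter (measurable_unitCell _)).nullMeasurableSet)
      (by exact ne_top_of_le_ne_top ENNReal.one_ne_top (Q_fin lam)), vol_unitCell]
  rfl

lemma exists_interior_ball {α : ℝ} (hconv : Convex ℝ P)
    (hvol : volume P = ENNReal.ofReal (α ^ n)) (hα : 0 < α) :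
    ∃ c r, 0 < r ∧ Metric.ball c r ⊆ P := by
  have hne : (interior P).Nonempty := by
    by_contra h
    rw [Set.not_nonempty_iff_eq_empty] at h
    have hspan : affineSpan ℝ P ≠ ⊤ := by
      intro htop
      rw [← hconv.interior_nonempty_iff_affineSpan_eq_top] at htop
      rw [h] at htop
      exact Set.not_nonempty_empty htop
    have h0' : volume P = 0 :=
      measure_mono_null (subset_affineSpan ℝ P)
        (MeasureTheory.Measure.addHaar_affineSubspace volume _ hspan)
    rw [hvol] at h0'
    rw [ENNReal.ofReal_eq_zero] at h0'
    nlinarith [pow_pos hα n]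
  obtain ⟨c, hc⟩ := hne
  obtain ⟨r, hr, hball⟩ := Metric.isOpen_iff.1 isOpen_interior c hc
  exact ⟨c, r, hr, hball.trans interior_subset⟩

lemma covered_of_large {c : EuclideanSpace ℝ (Fin n)} {r : ℝ} (hr : 0 < r)
    (hball : Metric.ball c r ⊆ P) {lam : ℝ} (hlam : (Real.sqrt n + 1) / r ≤ lam) :
    covUnion n P lam = Set.univ := by
  have hlam0 : 0 < lam := lt_of_lt_of_le (by positivity) hlam
  ext x
  simp only [Set.mem_univ, iff_true]
  set v : Fin n → ℤ := fun j => ⌊x j - lam * c j⌋ with hv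
  set y : EuclideanSpace ℝ (Fin n) := lam⁻¹ • (x - intVec n v) with hy
  have hcoord : ∀ j, 0 ≤ (x - intVec n v - lam • c) j ∧ (x - intVec n v - lam • c) j < 1 := by
    intro j
    have : (x - intVec n v - lam • c) j = x j - lam * c j - ⌊x j - lam * c j⌋ := by
      rw [sub_apply, sub_apply, intVec_apply, smul_apply']
      ring
    rw [this]
    constructor
    · linarith [Int.floor_le (x j - lam * c j)]
    · linarith [Int.lt_floor_add_one (x j - lam * c j)]
  have hnorm : ‖x - intVec n v - lam • c‖ ≤ Real.sqrt n := by
    rw [EuclideanSpace.norm_eq]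
    refine Real.sqrt_le_sqrt ?_
    calc (∑ j, ‖(x - intVec n v - lam • c) j‖ ^ 2) ≤ ∑ _j : Fin n, 1 := by
          refine Finset.sum_le_sum fun j _ => ?_
          have h := hcoord j
          rw [Real.norm_eq_abs, abs_of_nonneg h.1]
          nlinarith [h.1, h.2]
      _ = (n : ℝ) := by simp
  have hyP : y ∈ P := by
    refine hball ?_
    rw [Metric.mem_ball]
    have h1 : y - c = lam⁻¹ • (x - intVec n v - lam • c) := by
      rw [hy]
      match_scalars <;> field_simp
    rw [dist_eq_norm, h1, norm_smul]
    have : ‖lam⁻¹‖ = lam⁻¹ := by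
      rw [Real.norm_eq_abs, abs_of_pos (by positivity)]
    rw [this]
    have hlt : Real.sqrt n < lam * r := by
      have : (Real.sqrt n + 1) ≤ lam * r := by
        rw [div_le_iff₀ hr] at hlam
        linarith
      linarith
    calc lam⁻¹ * ‖x - intVec n v - lam • c‖ ≤ lam⁻¹ * Real.sqrt n := by
          exact mul_le_mul_of_nonneg_left hnorm (by positivity)
      _ < r := by
          rw [inv_mul_lt_iff₀ hlam0]
          exact hlt
  refine Set.mem_iUnion.2 ⟨v, ?_⟩
  rw [mem_tr]
  refine ⟨y, hyP, ?_⟩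
  show lam • y = x - intVec n v
  rw [hy, smul_smul, mul_inv_cancel₀ (ne_of_gt hlam0), one_smul]


lemma abs_coord_le_norm (x : EuclideanSpace ℝ (Fin n)) (j : Fin n) : |x j| ≤ ‖x‖ := by
  rw [EuclideanSpace.norm_eq, ← Real.sqrt_sq_eq_abs]
  refine Real.sqrt_le_sqrt ?_
  have : |x j| ^ 2 ≤ ∑ i, ‖x i‖ ^ 2 := by
    refine Finset.single_le_sum (f := fun i => ‖x i‖ ^ 2) (fun i _ => by positivity)
      (Finset.mem_univ j) |>.trans_eq' ?_
    rw [Real.norm_eq_abs]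
  simpa [sq_abs] using this

lemma finite_small_intVec (R : ℝ) : {v : Fin n → ℤ | ‖intVec n v‖ ≤ R}.Finite := by
  have hsub : {v : Fin n → ℤ | ‖intVec n v‖ ≤ R} ⊆
      Set.pi Set.univ (fun _ : Fin n => Set.Icc (⌈-R⌉ : ℤ) ⌊R⌋) := by
    intro v hv
    intro j _
    have h1 : |(v j : ℝ)| ≤ R := le_trans (abs_coord_le_norm (intVec n v) j) hv
    rw [abs_le] at h1
    constructor
    · rw [Int.ceil_le]; exact h1.1
    · rw [Int.le_floor]; exact h1.2
  exact Set.Finite.subset (Set.Finite.pi (fun _ => Set.finite_Icc _ _)) hsub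

lemma isClosed_covUnion (hPc : IsCompact P) (lam : ℝ) : IsClosed (covUnion n P lam) := by
  set K := lam • P with hK
  have hKc : IsCompact K := isCompact_smul_set hPc lam
  obtain ⟨M, hM⟩ : ∃ M, ∀ z ∈ K, ‖z‖ ≤ M := by
    obtain ⟨M, hM⟩ := hKc.isBounded.subset_closedBall 0
    exact ⟨M, fun z hz => by simpa [dist_eq_norm] using hM hz⟩
  rw [← isOpen_compl_iff, Metric.isOpen_iff]
  intro x hx
  set R := M + ‖x‖ + 1 with hR
  set S := ⋃ v ∈ {v : Fin n → ℤ | ‖intVec n v‖ ≤ R}, tr n v K with hS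
  have hSclosed : IsClosed S :=
    Set.Finite.isClosed_biUnion (finite_small_intVec R)
      (fun v _ => (hKc.image (continuous_const.add continuous_id)).isClosed)
  have hxS : x ∈ Sᶜ := by
    intro hmem
    apply hx
    obtain ⟨v, _, hv⟩ := Set.mem_iUnion₂.1 hmem
    exact Set.mem_iUnion.2 ⟨v, hv⟩
  obtain ⟨ε, hε, hball⟩ := Metric.isOpen_iff.1 hSclosed.isOpen_compl x hxS
  refine ⟨min ε 1, by positivity, ?_⟩
  intro y hy
  rw [Metric.mem_ball] at hy
  intro hyC
  obtain ⟨v, hv⟩ := Set.mem_iUnion.1 hyC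
  rw [mem_tr] at hv
  have hvnorm : ‖intVec n v‖ ≤ R := by
    have h1 : ‖y - intVec n v‖ ≤ M := hM _ hv
    have h2 : ‖y‖ ≤ ‖x‖ + 1 := by
      have hd : ‖y - x‖ < 1 := lt_of_lt_of_le (by rw [← dist_eq_norm]; exact hy) (min_le_right _ _)
      calc ‖y‖ ≤ ‖y - x‖ + ‖x‖ := by
            calc ‖y‖ = ‖(y - x) + x‖ := by congr 1; abel
              _ ≤ ‖y - x‖ + ‖x‖ := norm_add_le _ _
        _ ≤ ‖x‖ + 1 := by linarith
    calc ‖intVec n v‖ = ‖y - (y - intVec n v)‖ := by congr 1; abel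
      _ ≤ ‖y‖ + ‖y - intVec n v‖ := norm_sub_le _ _
      _ ≤ R := by rw [hR]; linarith
  have hyS : y ∈ S := Set.mem_iUnion₂.2 ⟨v, hvnorm, mem_tr.2 hv⟩
  have : y ∈ Sᶜ := hball (Metric.mem_ball.2 (lt_of_lt_of_le hy (min_le_left _ _)))
  exact this hyS

lemma iUnion_unitCell : (⋃ v : Fin n → ℤ, unitCell n v) = Set.univ := by
  refine Set.eq_univ_of_univ_subset ?_
  rw [← iUnion_icoCell (n := n)]
  exact Set.iUnion_mono fun v => fun x hx => fun j => ⟨(hx j).1, le_of_lt (hx j).2⟩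

lemma tr_covUnion (w : Fin n → ℤ) (lam : ℝ) :
    tr n w (covUnion n P lam) = covUnion n P lam := by
  unfold covUnion
  rw [show (tr n w (⋃ v : Fin n → ℤ, tr n v (lam • P)))
      = ⋃ v : Fin n → ℤ, tr n w (tr n v (lam • P)) from Set.image_iUnion]
  ext x
  simp only [Set.mem_iUnion, tr_tr]
  constructor
  · rintro ⟨v, hv⟩
    exact ⟨w + v, hv⟩
  · rintro ⟨v, hv⟩
    refine ⟨-w + v, ?_⟩
    rw [add_neg_cancel_left]
    exact hv

lemma mem_covUnion_shift (w : Fin n → ℤ) (lam : ℝ) (x : EuclideanSpace ℝ (Fin n)) :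
    x ∈ covUnion n P lam ↔ x - intVec n w ∈ covUnion n P lam := by
  conv_lhs => rw [← tr_covUnion (P := P) w lam]
  exact mem_tr


lemma tr_mono {S T : Set (EuclideanSpace ℝ (Fin n))} (h : S ⊆ T) (v : Fin n → ℤ) :
    tr n v S ⊆ tr n v T := Set.image_mono h

lemma nullMeasurable_A (hPc : IsCompact P) (lam : ℝ) (v : Fin n → ℤ) :
    NullMeasurableSet (tr n v (lam • P) ∩ unitCell n (fun _ => 0)) volume :=
  ((((isCompact_smul_set hPc lam).image
      (continuous_const.add continuous_id)).isClosed.measurableSet).inter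
    (measurable_unitCell _)).nullMeasurableSet

lemma Q_eq_of_pack {α : ℝ} (hPc : IsCompact P) (hconv : Convex ℝ P)
    (h0P : (0 : EuclideanSpace ℝ (Fin n)) ∈ P)
    (hvol : volume P = ENNReal.ofReal (α ^ n)) (hα : 0 < α)
    (hpack : ∀ v v' : Fin n → ℤ, v ≠ v' →
      volume (tr n v (α⁻¹ • P) ∩ tr n v' (α⁻¹ • P)) = 0)
    {lam : ℝ} (hlam : 0 ≤ lam) (hlamβ : lam ≤ α⁻¹) :
    Q n P lam = ENNReal.ofReal ((α * lam) ^ n) := by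
  have hsub : ∀ v : Fin n → ℤ, tr n v (lam • P) ⊆ tr n v (α⁻¹ • P) :=
    fun v => tr_mono (smul_set_mono_scale hconv h0P hlam hlamβ) v
  have hAE : Pairwise (Function.onFun (AEDisjoint volume)
      fun v : Fin n → ℤ => tr n v (lam • P) ∩ unitCell n (fun _ => 0)) := by
    intro v w hvw
    refine measure_mono_null ?_ (hpack v w hvw)
    intro x hx
    exact ⟨hsub v hx.1.1, hsub w hx.2.1⟩
  have hU := measure_iUnion₀ hAE (fun v => nullMeasurable_A hPc lam v)
  rw [Q, covUnion_inter_cell, hU, sum_vol_A hPc, vol_smul_P hvol hlam]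

lemma pack_of_Q_eq {α : ℝ} (hPc : IsCompact P)
    (hvol : volume P = ENNReal.ofReal (α ^ n))
    {lam : ℝ} (hlam : 0 ≤ lam) (hQ : Q n P lam = ENNReal.ofReal ((α * lam) ^ n))
    {a b : Fin n → ℤ} (hab : a ≠ b) :
    volume (tr n a (lam • P) ∩ tr n b (lam • P) ∩ unitCell n (fun _ => 0)) = 0 := by
  classical
  set A : (Fin n → ℤ) → Set (EuclideanSpace ℝ (Fin n)) :=
    fun v => tr n v (lam • P) ∩ unitCell n (fun _ => 0) with hA
  have hfin : (∑' v, volume (A v)) ≠ ⊤ := by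
    rw [hA]
    simp only
    rw [sum_vol_A hPc, vol_smul_P hvol hlam]
    exact ENNReal.ofReal_ne_top
  have heq : volume (⋃ v, A v) = ∑' v, volume (A v) := by
    rw [hA]
    simp only
    rw [← covUnion_inter_cell, ← Q, hQ, sum_vol_A hPc, vol_smul_P hvol hlam]
  have h0 := vol_pair_zero (fun v => nullMeasurable_A hPc lam v) hfin heq hab
  refine measure_mono_null ?_ h0
  intro x hx
  exact ⟨⟨hx.1.1, hx.2⟩, ⟨hx.1.2, hx.2⟩⟩

lemma pair_inter_cell_translate (a b w : Fin n → ℤ) (S : Set (EuclideanSpace ℝ (Fin n))) :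
    volume (tr n a S ∩ tr n b S ∩ unitCell n w)
      = volume (tr n (a - w) S ∩ tr n (b - w) S ∩ unitCell n (fun _ => 0)) := by
  have hinj : Function.Injective (fun x : EuclideanSpace ℝ (Fin n) => intVec n w + x) :=
    fun x y h => by simpa using h
  have key : tr n a S ∩ tr n b S ∩ unitCell n w
      = tr n w (tr n (a - w) S ∩ tr n (b - w) S ∩ unitCell n (fun _ => 0)) := by
    have h1 : tr n w (tr n (a - w) S ∩ tr n (b - w) S ∩ unitCell n (fun _ => 0))
        = tr n w (tr n (a - w) S) ∩ tr n w (tr n (b - w) S)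
          ∩ tr n w (unitCell n (fun _ => 0)) := by
      unfold tr
      rw [Set.image_inter hinj, Set.image_inter hinj]
    rw [h1, tr_tr, tr_tr, tr_unitCell]
    have e1 : w + (a - w) = a := by abel
    have e2 : w + (b - w) = b := by abel
    rw [e1, e2]
  rw [key, vol_tr]

lemma global_pair_zero {S : Set (EuclideanSpace ℝ (Fin n))}
    (hcell : ∀ a b : Fin n → ℤ, a ≠ b →
      volume (tr n a S ∩ tr n b S ∩ unitCell n (fun _ => 0)) = 0)
    {v v' : Fin n → ℤ} (hvv' : v ≠ v') :
    volume (tr n v S ∩ tr n v' S) = 0 := by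
  have hcover : tr n v S ∩ tr n v' S
      ⊆ ⋃ w : Fin n → ℤ, (tr n v S ∩ tr n v' S ∩ unitCell n w) := by
    intro x hx
    have : x ∈ ⋃ w : Fin n → ℤ, unitCell n w := by rw [iUnion_unitCell]; trivial
    obtain ⟨w, hw⟩ := Set.mem_iUnion.1 this
    exact Set.mem_iUnion.2 ⟨w, hx, hw⟩
  refine measure_mono_null hcover (measure_iUnion_null fun w => ?_)
  rw [pair_inter_cell_translate]
  refine hcell _ _ ?_
  intro h
  exact hvv' (by
    have := congrArg (fun z => z + w) h
    simpa using this)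

end TilingAux


end

open TilingAux in
/-- For any lattice polytope `P ⊂ ℝ^{d-1}` with `Vol_{d-1}(P) = α^{d-1}`, one
has `∫₀^∞ φ_D(λ)dλ ≥ (1/α)·∫₀^1 (1-β^{d-1})dβ = (1/α)·(d-1)/d`, with equality
if and only if `(1/α)P` tiles `ℝ^{d-1}` by `ℤ^{d-1}`-translates (covering with
overlaps of measure zero). -/
theorem phi_integral_min_iff_tiling
    (n l : ℕ) (hl : 1 ≤ l)
    (vert : Fin l → EuclideanSpace ℝ (Fin n))
    (hvZ : ∀ i, ∀ j : Fin n, ∃ z : ℤ, vert i j = (z : ℝ)) (hv0 : ∃ i, vert i = 0)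
    (P : Set (EuclideanSpace ℝ (Fin n)))
    (hP : P = convexHull ℝ (Set.range vert))
    (α : ℝ) (hα : 0 < α) (hvol : volume P = ENNReal.ofReal (α ^ n))
    (φ : ℝ → ℝ)
    (hφ : ∀ lam : ℝ, φ lam = (volume {x : EuclideanSpace ℝ (Fin n) |
      x ∈ unitCell n (fun _ => 0) ∧ ¬ CoveredAt n P x (lam + 1)}).toReal) :
    (1 / α) * ((n : ℝ) / (n + 1)) ≤ (∫ lam in Set.Ioi (0 : ℝ), φ lam) ∧
    ((∫ lam in Set.Ioi (0 : ℝ), φ lam) = (1 / α) * ((n : ℝ) / (n + 1)) ↔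
      ((⋃ v : Fin n → ℤ, (fun x => intVec n v + x) '' (α⁻¹ • P)) = Set.univ ∧
        ∀ v v' : Fin n → ℤ, v ≠ v' →
          volume (((fun x => intVec n v + x) '' (α⁻¹ • P)) ∩
            ((fun x => intVec n v' + x) '' (α⁻¹ • P))) = 0)) := by
  have hβ : 0 < α⁻¹ := inv_pos.2 hα
  have hPconv : Convex ℝ P := hP ▸ convex_convexHull ℝ _
  have hPc : IsCompact P := hP ▸ (Set.finite_range vert).isCompact_convexHull ℝ
  have h0P : (0 : EuclideanSpace ℝ (Fin n)) ∈ P := by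
    obtain ⟨i, hi⟩ := hv0
    rw [hP]
    exact subset_convexHull ℝ _ ⟨i, hi⟩
  have hQfin : ∀ lam : ℝ, Q n P lam ≠ ⊤ :=
    fun lam => ne_top_of_le_ne_top ENNReal.one_ne_top (Q_fin lam)
  have hphi_eq : ∀ lam : ℝ, 0 ≤ lam → φ lam = 1 - (Q n P lam).toReal := by
    intro lam hlam
    rw [hφ lam, vol_uncov hPc hlam,
      ENNReal.toReal_sub_of_le (Q_fin lam) ENNReal.one_ne_top, ENNReal.toReal_one]
  have hphi_neg : ∀ lam : ℝ, lam < 0 → φ lam = 1 := by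
    intro lam hlam
    rw [hφ lam, uncov_eq_neg hlam, vol_unitCell]
    simp
  have hQmono : ∀ a b : ℝ, 0 ≤ a → a ≤ b → Q n P a ≤ Q n P b := by
    intro a b ha hab
    exact measure_mono (Set.inter_subset_inter
      (covUnion_mono hPconv h0P ha hab) le_rfl)
  have hphi_anti : Antitone φ := by
    intro a b hab
    rcases lt_or_ge a 0 with ha | ha
    · rcases lt_or_ge b 0 with hb | hb
      · rw [hphi_neg a ha, hphi_neg b hb]
      · rw [hphi_neg a ha, hphi_eq b hb]
        have := ENNReal.toReal_nonneg (a := Q n P b)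
        linarith
    · have hb : (0:ℝ) ≤ b := ha.trans hab
      rw [hphi_eq a ha, hphi_eq b hb]
      have h2 : (Q n P a).toReal ≤ (Q n P b).toReal :=
        ENNReal.toReal_le_toReal (hQfin a) (hQfin b) |>.2 (hQmono a b ha hab)
      linarith
  have hphi_nonneg : ∀ lam : ℝ, 0 ≤ φ lam := fun lam => by
    rw [hφ lam]; exact ENNReal.toReal_nonneg
  have hphi_le_one : ∀ lam : ℝ, φ lam ≤ 1 := by
    intro lam
    rw [hφ lam]
    have hle : volume {x : EuclideanSpace ℝ (Fin n) |
        x ∈ unitCell n (fun _ => 0) ∧ ¬ CoveredAt n P x (lam + 1)} ≤ 1 := by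
      refine le_trans (measure_mono fun x hx => hx.1) ?_
      rw [vol_unitCell]
    exact ENNReal.toReal_le_of_le_ofReal zero_le_one (by simpa using hle)
  have hphi_low : ∀ lam : ℝ, 0 ≤ lam → 1 - α^n * lam^n ≤ φ lam := by
    intro lam hlam
    rw [hphi_eq lam hlam]
    have h1 := Q_le hPc hvol hlam
    have h2 : (Q n P lam).toReal ≤ (α*lam)^n :=
      ENNReal.toReal_le_of_le_ofReal (by positivity) h1
    rw [mul_pow] at h2
    linarith
  obtain ⟨c, r, hr, hball⟩ := exists_interior_ball hPconv hvol hα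
  set R : ℝ := max ((Real.sqrt n + 1)/r) 1 with hRdef
  have hR1 : (1:ℝ) ≤ R := le_max_right _ _
  have hR0 : (0:ℝ) < R := lt_of_lt_of_le one_pos hR1
  have hphi_R : ∀ lam : ℝ, R ≤ lam → φ lam = 0 := by
    intro lam hlam
    have hcov := covered_of_large (P := P) hr hball (le_trans (le_max_left _ _) hlam)
    have hlam0 : (0:ℝ) ≤ lam := le_trans (le_trans zero_le_one hR1) hlam
    rw [hphi_eq lam hlam0]
    have hQ1 : Q n P lam = 1 := by
      rw [Q, hcov, Set.univ_inter, vol_unitCell]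
    rw [hQ1]
    simp
  have hmeas : Measurable φ := hphi_anti.measurable
  have hInt0R : IntegrableOn φ (Set.Ioc 0 R) := by
    refine Measure.integrableOn_of_bounded (M := 1) (by simp) hmeas.aestronglyMeasurable ?_
    refine Filter.Eventually.of_forall fun x => ?_
    rw [Real.norm_eq_abs, abs_of_nonneg (hphi_nonneg x)]
    exact hphi_le_one x
  have hIntR : IntegrableOn φ (Set.Ioi R) := by
    refine (integrableOn_congr_fun (g := fun _ => (0:ℝ)) (s := Set.Ioi R)
      (fun x hx => hphi_R x (le_of_lt hx)) measurableSet_Ioi).2 integrableOn_zero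
  have hIntIoi0 : IntegrableOn φ (Set.Ioi 0) := by
    rw [← Set.Ioc_union_Ioi_eq_Ioi (le_of_lt hR0)]
    exact hInt0R.union hIntR
  have hsub1 : Set.Ioc (0:ℝ) α⁻¹ ⊆ Set.Ioi 0 := fun x hx => hx.1
  have hsub2 : Set.Ioi α⁻¹ ⊆ Set.Ioi (0:ℝ) := fun x hx => lt_trans hβ hx
  have hsplit : (∫ lam in Set.Ioi (0:ℝ), φ lam)
      = (∫ lam in Set.Ioc (0:ℝ) α⁻¹, φ lam) + ∫ lam in Set.Ioi α⁻¹, φ lam := by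
    rw [← setIntegral_union (Set.Ioc_disjoint_Ioi le_rfl) measurableSet_Ioi
      (hIntIoi0.mono_set hsub1) (hIntIoi0.mono_set hsub2),
      Set.Ioc_union_Ioi_eq_Ioi (le_of_lt hβ)]
  have hlowcont : Continuous (fun lam : ℝ => 1 - α^n * lam^n) :=
    continuous_const.sub (continuous_const.mul (continuous_pow n))
  have hlowint : IntegrableOn (fun lam : ℝ => 1 - α^n * lam^n) (Set.Ioc 0 α⁻¹) :=
    hlowcont.integrableOn_Ioc
  have hn1 : ((n:ℝ) + 1) ≠ 0 := by positivity
  have hlowval : (∫ lam in Set.Ioc (0:ℝ) α⁻¹, (1 - α^n * lam^n))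
      = (1/α) * ((n:ℝ)/(n+1)) := by
    rw [← intervalIntegral.integral_of_le (le_of_lt hβ)]
    rw [intervalIntegral.integral_sub intervalIntegrable_const
      ((intervalIntegral.intervalIntegrable_pow n).const_mul _)]
    rw [intervalIntegral.integral_const, intervalIntegral.integral_const_mul, integral_pow]
    simp only [smul_eq_mul, sub_zero, mul_one]
    rw [zero_pow (Nat.succ_ne_zero n)]
    field_simp
    have hα0 : α ≠ 0 := hα.ne'
    have hx : α * α ^ n * ((1 / α) ^ (n + 1) - 0) = 1 := by
      rw [sub_zero, one_div, inv_pow, pow_succ]; field_simp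
    rw [hx]; ring
  have hIneq1 : (∫ lam in Set.Ioc (0:ℝ) α⁻¹, (1 - α^n * lam^n))
      ≤ ∫ lam in Set.Ioc (0:ℝ) α⁻¹, φ lam := by
    refine setIntegral_mono_on hlowint (hIntIoi0.mono_set hsub1) measurableSet_Ioc ?_
    intro x hx
    exact hphi_low x (le_of_lt hx.1)
  have hIneq2 : (0:ℝ) ≤ ∫ lam in Set.Ioi α⁻¹, φ lam :=
    setIntegral_nonneg measurableSet_Ioi (fun x _ => hphi_nonneg x)
  have hmain : (1 / α) * ((n : ℝ) / (n + 1)) ≤ ∫ lam in Set.Ioi (0:ℝ), φ lam := by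
    rw [hsplit, ← hlowval]
    linarith
  refine ⟨hmain, ?_, ?_⟩
  · intro heqI
    have hIocEq : (∫ lam in Set.Ioc (0:ℝ) α⁻¹, φ lam)
        = ∫ lam in Set.Ioc (0:ℝ) α⁻¹, (1 - α^n * lam^n) := by
      rw [hsplit] at heqI
      linarith [hIneq1, hIneq2]
    have hdiff0 : (∫ lam in Set.Ioc (0:ℝ) α⁻¹, (φ lam - (1 - α^n * lam^n))) = 0 := by
      rw [integral_sub (hIntIoi0.mono_set hsub1) hlowint, hIocEq, sub_self]
    have hnn : 0 ≤ᵐ[volume.restrict (Set.Ioc (0:ℝ) α⁻¹)]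
        fun lam => φ lam - (1 - α^n * lam^n) := by
      rw [Filter.EventuallyLE, ae_restrict_iff' measurableSet_Ioc]
      refine Filter.Eventually.of_forall fun x hx => ?_
      simp only [Pi.zero_apply]
      linarith [hphi_low x hx.1.le]
    have hae := (integral_eq_zero_iff_of_nonneg_ae hnn
      ((hIntIoi0.mono_set hsub1).sub hlowint)).mp hdiff0
    have hae2 : ∀ᵐ lam : ℝ ∂volume,
        lam ∈ Set.Ioc (0:ℝ) α⁻¹ → φ lam = 1 - α^n * lam^n := by
      have h1 := (ae_restrict_iff' measurableSet_Ioc).1 hae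
      filter_upwards [h1] with lam h2 hm
      have h3 := h2 hm
      simp only [Pi.zero_apply] at h3
      linarith
    have hsel : ∀ a : ℝ, 0 < a → a < α⁻¹ →
        ∃ lam, a < lam ∧ lam < α⁻¹ ∧ φ lam = 1 - α^n * lam^n := by
      intro a ha hab
      by_contra hcon
      push_neg at hcon
      have hsubBad : Set.Ioo a α⁻¹ ⊆ {lam : ℝ |
          ¬ (lam ∈ Set.Ioc (0:ℝ) α⁻¹ → φ lam = 1 - α^n * lam^n)} := by
        intro t ht
        simp only [Set.mem_setOf_eq]
        intro himp
        exact hcon t ht.1 ht.2 (himp ⟨lt_trans ha ht.1, ht.2.le⟩)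
      have hnull := measure_mono_null hsubBad (ae_iff.1 hae2)
      rw [Real.volume_Ioo, ENNReal.ofReal_eq_zero] at hnull
      linarith
    have hcellpack : ∀ a b : Fin n → ℤ, a ≠ b →
        volume (tr n a (α⁻¹ • P) ∩ tr n b (α⁻¹ • P) ∩ unitCell n (fun _ => 0)) = 0 := by
      intro a b hab
      have hlow_pos : ∀ k : ℕ, 0 < α⁻¹ - α⁻¹/((k:ℝ)+2) := by
        intro k
        have hk0 : (0:ℝ) ≤ (k:ℝ) := Nat.cast_nonneg k
        have h2 : α⁻¹/((k:ℝ)+2) < α⁻¹ := div_lt_self hβ (by linarith)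
        linarith
      have hsel' : ∀ k : ℕ, ∃ lam, α⁻¹ - α⁻¹/((k:ℝ)+2) < lam ∧ lam < α⁻¹ ∧
          φ lam = 1 - α^n * lam^n := by
        intro k
        refine hsel _ (hlow_pos k) ?_
        have hk0 : (0:ℝ) ≤ (k:ℝ) := Nat.cast_nonneg k
        have : 0 < α⁻¹/((k:ℝ)+2) := by positivity
        linarith
      choose lam hlam1 hlam2 hlam3 using hsel'
      have hlam0 : ∀ k, 0 < lam k := fun k => lt_trans (hlow_pos k) (hlam1 k)
      have hQk : ∀ k, Q n P (lam k) = ENNReal.ofReal ((α * lam k)^n) := by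
        intro k
        have h1 := hphi_eq (lam k) (hlam0 k).le
        rw [hlam3 k] at h1
        have h2 : (Q n P (lam k)).toReal = (α * lam k)^n := by
          rw [mul_pow]; linarith
        rw [← ENNReal.ofReal_toReal (hQfin (lam k)), h2]
      have hpairk : ∀ k, volume (tr n a (lam k • P) ∩ tr n b (lam k • P)
          ∩ unitCell n (fun _ => 0)) = 0 :=
        fun k => pack_of_Q_eq hPc hvol (hlam0 k).le (hQk k) hab
      have honele : ∀ k : ℕ, (α * lam k)^n ≤ 1 := by
        intro k
        have h1 : α * lam k ≤ 1 := by
          have h2 : α * lam k ≤ α * α⁻¹ :=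
            mul_le_mul_of_nonneg_left (hlam2 k).le hα.le
          rwa [mul_inv_cancel₀ (ne_of_gt hα)] at h2
        exact pow_le_one₀ (mul_nonneg hα.le (hlam0 k).le) h1
      have hdiffvol : ∀ k, volume ((α⁻¹ • P) \ (lam k • P))
          = ENNReal.ofReal (1 - (α * lam k)^n) := by
        intro k
        rw [measure_diff (smul_set_mono_scale hPconv h0P (hlam0 k).le (hlam2 k).le)
          ((isCompact_smul_set hPc _).isClosed.measurableSet.nullMeasurableSet)
          (by rw [vol_smul_P hvol (hlam0 k).le]; exact ENNReal.ofReal_ne_top),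
          vol_smul_P hvol (hlam0 k).le, vol_smul_P hvol hβ.le,
          mul_inv_cancel₀ (ne_of_gt hα), one_pow,
          ← ENNReal.ofReal_sub _ (pow_nonneg (mul_nonneg hα.le (hlam0 k).le) n)]
      have hXsub : ∀ k, tr n a (α⁻¹ • P) ∩ tr n b (α⁻¹ • P) ∩ unitCell n (fun _ => 0)
          ⊆ (tr n a (lam k • P) ∩ tr n b (lam k • P) ∩ unitCell n (fun _ => 0))
            ∪ tr n a ((α⁻¹ • P) \ (lam k • P)) ∪ tr n b ((α⁻¹ • P) \ (lam k • P)) := by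
        intro k x hx
        obtain ⟨⟨hxa, hxb⟩, hxc⟩ := hx
        rw [mem_tr] at hxa hxb
        by_cases h1 : x - intVec n a ∈ lam k • P
        · by_cases h2 : x - intVec n b ∈ lam k • P
          · exact Or.inl (Or.inl ⟨⟨mem_tr.2 h1, mem_tr.2 h2⟩, hxc⟩)
          · exact Or.inr (mem_tr.2 ⟨hxb, h2⟩)
        · exact Or.inl (Or.inr (mem_tr.2 ⟨hxa, h1⟩))
      have hXle : ∀ k : ℕ, volume (tr n a (α⁻¹ • P) ∩ tr n b (α⁻¹ • P)
          ∩ unitCell n (fun _ => 0)) ≤ ENNReal.ofReal (2 * (1 - (α * lam k)^n)) := by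
        intro k
        refine le_trans (measure_mono (hXsub k)) ?_
        refine le_trans (measure_union_le _ _) ?_
        refine le_trans (add_le_add_left (measure_union_le _ _) _) ?_
        rw [hpairk k, zero_add, vol_tr, vol_tr, hdiffvol k,
          ← ENNReal.ofReal_add (by linarith [honele k]) (by linarith [honele k])]
        exact ENNReal.ofReal_le_ofReal (by linarith)
      have hlamten : Filter.Tendsto lam Filter.atTop (nhds α⁻¹) := by
        have h1 : Filter.Tendsto (fun k : ℕ => α⁻¹/((k:ℝ)+2)) Filter.atTop (nhds 0) := by
          refine Filter.Tendsto.div_atTop tendsto_const_nhds ?_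
          refine Filter.tendsto_atTop_add_const_right _ 2 ?_
          exact tendsto_natCast_atTop_atTop
        have hlb : Filter.Tendsto (fun k : ℕ => α⁻¹ - α⁻¹/((k:ℝ)+2))
            Filter.atTop (nhds α⁻¹) := by
          have := Filter.Tendsto.const_sub α⁻¹ h1
          simpa using this
        exact tendsto_of_tendsto_of_tendsto_of_le_of_le hlb tendsto_const_nhds
          (fun k => (hlam1 k).le) (fun k => (hlam2 k).le)
      have hten : Filter.Tendsto (fun k : ℕ => ENNReal.ofReal (2 * (1 - (α * lam k)^n)))
          Filter.atTop (nhds 0) := by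
        have hc : Continuous (fun t : ℝ => 2 * (1 - (α * t)^n)) :=
          continuous_const.mul (continuous_const.sub
            ((continuous_const.mul continuous_id).pow n))
        have h2 : Filter.Tendsto (fun k : ℕ => 2 * (1 - (α * lam k)^n)) Filter.atTop
            (nhds (2 * (1 - (α * α⁻¹)^n))) := (hc.tendsto α⁻¹).comp hlamten
        rw [mul_inv_cancel₀ (ne_of_gt hα), one_pow, sub_self, mul_zero] at h2
        have h3 := (ENNReal.continuous_ofReal.tendsto 0).comp h2
        rw [ENNReal.ofReal_zero] at h3
        exact h3
      exact le_antisymm (ge_of_tendsto hten (Filter.Eventually.of_forall hXle)) zero_le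
    have hglobalpack : ∀ v v' : Fin n → ℤ, v ≠ v' →
        volume (tr n v (α⁻¹ • P) ∩ tr n v' (α⁻¹ • P)) = 0 :=
      fun v v' h => global_pair_zero hcellpack h
    have hQβ : Q n P α⁻¹ = 1 := by
      rw [Q_eq_of_pack hPc hPconv h0P hvol hα hglobalpack hβ.le le_rfl,
        mul_inv_cancel₀ (ne_of_gt hα), one_pow, ENNReal.ofReal_one]
    have hcellfull : volume ((unitCell n (fun _ => 0)) \ covUnion n P α⁻¹) = 0 := by
      have h1 := vol_uncov (P := P) hPc hβ.le
      rw [uncov_eq hβ.le] at h1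
      rw [h1, hQβ, tsub_self]
    have hcompl : volume ((covUnion n P α⁻¹)ᶜ) = 0 := by
      have hsubU : (covUnion n P α⁻¹)ᶜ ⊆ ⋃ w : Fin n → ℤ,
          ((covUnion n P α⁻¹)ᶜ ∩ unitCell n w) := by
        intro x hx
        have hxu : x ∈ ⋃ w : Fin n → ℤ, unitCell n w := by rw [iUnion_unitCell]; trivial
        obtain ⟨w, hw⟩ := Set.mem_iUnion.1 hxu
        exact Set.mem_iUnion.2 ⟨w, hx, hw⟩
      refine measure_mono_null hsubU (measure_iUnion_null fun w => ?_)
      have hset : (covUnion n P α⁻¹)ᶜ ∩ unitCell n w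
          = tr n w ((covUnion n P α⁻¹)ᶜ ∩ unitCell n (fun _ => 0)) := by
        ext x
        rw [← tr_unitCell (n := n) w]
        simp only [Set.mem_inter_iff, Set.mem_compl_iff, mem_tr]
        rw [mem_covUnion_shift w α⁻¹ x]
      rw [hset, vol_tr]
      refine measure_mono_null ?_ hcellfull
      intro x hx
      exact ⟨hx.2, hx.1⟩
    have hCuniv : covUnion n P α⁻¹ = Set.univ := by
      by_contra hne
      obtain ⟨x, hx⟩ := (Set.ne_univ_iff_exists_notMem _).1 hne
      obtain ⟨ε, hε, hballx⟩ := Metric.isOpen_iff.1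
        (isClosed_covUnion hPc α⁻¹).isOpen_compl x hx
      have h1 : volume (Metric.ball x ε) ≤ 0 := hcompl ▸ measure_mono hballx
      have h2 := Metric.measure_ball_pos volume x hε
      exact (ne_of_gt h2) (le_antisymm h1 zero_le)
    exact ⟨hCuniv, hglobalpack⟩
  · rintro ⟨hcov, hpack⟩
    have hcov' : covUnion n P α⁻¹ = Set.univ := hcov
    have hpack' : ∀ v v' : Fin n → ℤ, v ≠ v' →
        volume (tr n v (α⁻¹ • P) ∩ tr n v' (α⁻¹ • P)) = 0 := hpack
    have hphieq : Set.EqOn φ (fun lam => 1 - α^n * lam^n) (Set.Ioc (0:ℝ) α⁻¹) := by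
      intro lam hlam
      rw [hphi_eq lam hlam.1.le,
        Q_eq_of_pack hPc hPconv h0P hvol hα hpack' hlam.1.le hlam.2,
        ENNReal.toReal_ofReal (pow_nonneg (mul_nonneg hα.le hlam.1.le) n), mul_pow]
    have hphi0 : Set.EqOn φ (fun _ => (0:ℝ)) (Set.Ioi α⁻¹) := by
      intro lam hlam
      have hlam0 : (0:ℝ) ≤ lam := le_of_lt (lt_trans hβ hlam)
      have h1 : covUnion n P lam = Set.univ := by
        refine Set.eq_univ_of_univ_subset ?_
        rw [← hcov']
        exact covUnion_mono hPconv h0P (le_of_lt hβ) (le_of_lt hlam)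
      rw [hphi_eq lam hlam0]
      have hQ1 : Q n P lam = 1 := by
        rw [Q, h1, Set.univ_inter, vol_unitCell]
      rw [hQ1]
      simp
    rw [hsplit, setIntegral_congr_fun measurableSet_Ioc hphieq,
      setIntegral_congr_fun measurableSet_Ioi hphi0, hlowval]
    simp
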